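/- Fix m, l, g > 0, I₁, I₃ > 0, and ρ ∈ ℝ with ρ ≠ 0 and I₁ ρ ≠ m² l², and set 𝕀 = diag(I₁, I₁, I₃), χ = e₃ = (0,0,1). If Ω, v, Γ : ℝ → ℝ³ solve the closed-loop Euler–Poincaré system with these data, then the modified energy 𝓔(t) = ½(I₁(Ω₁(t)² + Ω₂(t)²) + I₃ Ω₃(t)²) + m (I₁ ρ/(I₁ ρ − m² l²)) g l Γ₃(t) is constant in t. -/

import Mathlib

/-!
Eliminating `v`: with the controlled inertia `J = ρ𝕀 + m²l²(χχᵀ - |χ|²)` one has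
`ρμ + ml (p × χ) = JΩ`, and the Jacobi identity turns the closed-loop equations into
`(JΩ)' = JΩ × Ω + ρmgl (Γ × χ)`, `Γ' = Γ × Ω`: a heavy top with inertia `J` and weight `ρmgl`,
whose energy `½ Ω·JΩ + ρmgl Γ·χ` is conserved. For the Lagrange top
`J = diag(ρI₁ - m²l², ρI₁ - m²l², ρI₃)`, so the spin `Ω₃` is conserved too, and `𝓔` is
`I₁/(I₁ρ - m²l²)` times that energy plus a multiple of `Ω₃²`.
-/

open Matrix

/-- The closed-loop Euler–Poincaré system: with `μ = 𝕀Ω + m l (χ × v)` and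
`p = ρ v + m l (Ω × χ)`, the curves satisfy
`μ' = μ × Ω + p × v − m g l (χ × Γ)`, `p' = p × Ω`, `Γ' = Γ × Ω`. -/
def ClosedLoopEP (m l g ρ : ℝ) (χ : Fin 3 → ℝ) (I : Matrix (Fin 3) (Fin 3) ℝ)
    (Ω v Γ : ℝ → Fin 3 → ℝ) : Prop :=
  Differentiable ℝ Ω ∧ Differentiable ℝ v ∧ Differentiable ℝ Γ ∧
  (∀ t, deriv (fun s => I *ᵥ Ω s + (m * l) • (χ ⨯₃ v s)) t
      = (I *ᵥ Ω t + (m * l) • (χ ⨯₃ v t)) ⨯₃ Ω t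
        + (ρ • v t + (m * l) • (Ω t ⨯₃ χ)) ⨯₃ v t - (m * g * l) • (χ ⨯₃ Γ t)) ∧
  (∀ t, deriv (fun s => ρ • v s + (m * l) • (Ω s ⨯₃ χ)) t
      = (ρ • v t + (m * l) • (Ω t ⨯₃ χ)) ⨯₃ Ω t) ∧
  (∀ t, deriv Γ t = Γ t ⨯₃ Ω t)

section Calculus
variable {ι κ : Type*} [Fintype ι] [Fintype κ] {f g : ℝ → ι → ℝ} {f' g' : ι → ℝ} {t : ℝ}

theorem HasDerivAt.dotProduct (hf : HasDerivAt f f' t) (hg : HasDerivAt g g' t) :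
    HasDerivAt (fun s => f s ⬝ᵥ g s) (f t ⬝ᵥ g' + f' ⬝ᵥ g t) t := by
  simpa using (dotProductBilin ℝ ℝ).toContinuousBilinearMap.hasDerivAt_of_bilinear
    (fun _ => hf) (fun _ => hg)

theorem HasDerivAt.mulVec (A : Matrix κ ι ℝ) (hf : HasDerivAt f f' t) :
    HasDerivAt (fun s => A *ᵥ f s) (A *ᵥ f') t :=
  (A.mulVecLin.toContinuousLinearMap.hasFDerivAt (x := f t)).comp_hasDerivAt t hf

theorem HasDerivAt.cross {f g : ℝ → Fin 3 → ℝ} {f' g' : Fin 3 → ℝ}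
    (hf : HasDerivAt f f' t) (hg : HasDerivAt g g' t) :
    HasDerivAt (fun s => f s ⨯₃ g s) (f t ⨯₃ g' + f' ⨯₃ g t) t := by
  simpa using (crossProduct (R := ℝ)).toContinuousBilinearMap.hasDerivAt_of_bilinear
    (fun _ => hf) (fun _ => hg)

theorem is_const_of_hasDerivAt_zero {E : Type*} [NormedAddCommGroup E] [NormedSpace ℝ E]
    {f : ℝ → E} (hf : ∀ t, HasDerivAt f 0 t) (x y : ℝ) :
    f x = f y :=
  is_const_of_deriv_eq_zero (fun t => (hf t).differentiableAt) (fun t => (hf t).deriv) x y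

end Calculus

theorem jacobi_cross' (x y z : Fin 3 → ℝ) :
    (x ⨯₃ y) ⨯₃ z + (y ⨯₃ z) ⨯₃ x + (z ⨯₃ x) ⨯₃ y = 0 := by
  have h := jacobi_cross z x y
  rw [← cross_anticomm (x ⨯₃ y) z, ← cross_anticomm (y ⨯₃ z) x, ← cross_anticomm (z ⨯₃ x) y] at h
  linear_combination (norm := module) -h

section HeavyTop
variable {J : Matrix (Fin 3) (Fin 3) ℝ} {M : ℝ} {χ : Fin 3 → ℝ} {Ω Γ : ℝ → Fin 3 → ℝ} {t : ℝ}

noncomputable def heavyTopEnergy (J : Matrix (Fin 3) (Fin 3) ℝ) (M : ℝ) (χ : Fin 3 → ℝ)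
    (Ω Γ : ℝ → Fin 3 → ℝ) (t : ℝ) : ℝ :=
  (1 / 2) * (Ω t ⬝ᵥ J *ᵥ Ω t) + M * (Γ t ⬝ᵥ χ)

theorem heavyTopEnergy_hasDerivAt_zero (hJ : J.IsSymm) (hΩ : DifferentiableAt ℝ Ω t)
    (hJΩ : HasDerivAt (fun s => J *ᵥ Ω s) ((J *ᵥ Ω t) ⨯₃ Ω t + M • (Γ t ⨯₃ χ)) t)
    (hΓ : HasDerivAt Γ (Γ t ⨯₃ Ω t) t) :
    HasDerivAt (heavyTopEnergy J M χ Ω Γ) 0 t := by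
  have hΩ' := hΩ.hasDerivAt
  have euler := (hΩ'.mulVec J).unique hJΩ
  have hsymm : deriv Ω t ⬝ᵥ J *ᵥ Ω t = Ω t ⬝ᵥ J *ᵥ deriv Ω t := by
    rw [dotProduct_comm, dotProduct_mulVec, ← mulVec_transpose, hJ.eq]
  refine (((hΩ'.dotProduct (hΩ'.mulVec J)).const_mul (1 / 2)).add
    ((hΓ.dotProduct (hasDerivAt_const t χ)).const_mul M)).congr_deriv ?_
  rw [hsymm, euler, dotProduct_add, dotProduct_smul, dot_cross_self, dotProduct_comm _ χ,
    triple_product_permutation χ, triple_product_permutation (Ω t), ← cross_anticomm (Ω t) χ,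
    dotProduct_neg, smul_eq_mul, dotProduct_zero]
  ring

theorem heavyTopEnergy_lagrangeTop (a c : ℝ) (t : ℝ) :
    heavyTopEnergy (diagonal ![a, a, c]) M ![0, 0, 1] Ω Γ t
      = (1 / 2) * (a * (Ω t 0 ^ 2 + Ω t 1 ^ 2) + c * Ω t 2 ^ 2) + M * Γ t 2 := by
  simp only [heavyTopEnergy, dotProduct, mulVec_diagonal, Fin.sum_univ_three, cons_val_zero,
    cons_val_one, cons_val_two, tail_cons, head_cons]
  ring

theorem lagrangeTop_hasDerivAt_spin {a c : ℝ}
    (hJΩ : HasDerivAt (fun s => diagonal ![a, a, c] *ᵥ Ω s)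
      ((diagonal ![a, a, c] *ᵥ Ω t) ⨯₃ Ω t + M • (Γ t ⨯₃ ![0, 0, 1])) t) :
    HasDerivAt (fun s => c * Ω s 2) 0 t := by
  have spin := hasDerivAt_pi.mp hJΩ 2
  simp only [mulVec_diagonal, cross_apply, cons_val_zero, cons_val_one, cons_val_two, tail_cons,
    head_cons, Pi.add_apply, Pi.smul_apply, smul_eq_mul, mul_zero, mul_one, sub_self] at spin
  exact spin.congr_deriv (by ring)

end HeavyTop

section ClosedLoop
variable {m l g ρ : ℝ} {χ : Fin 3 → ℝ} {I : Matrix (Fin 3) (Fin 3) ℝ}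

variable (m l ρ χ I) in
def closedLoopInertia : Matrix (Fin 3) (Fin 3) ℝ :=
  ρ • I + (m * l) ^ 2 • (vecMulVec χ χ - (χ ⬝ᵥ χ) • 1)

theorem closedLoopInertia_mulVec (w : Fin 3 → ℝ) :
    closedLoopInertia m l ρ χ I *ᵥ w = ρ • (I *ᵥ w) + (m * l) ^ 2 • ((w ⨯₃ χ) ⨯₃ χ) := by
  simp [closedLoopInertia, add_mulVec, sub_mulVec, smul_mulVec, vecMulVec_mulVec,
    cross_cross_eq_smul_sub_smul, dotProduct_comm]

theorem closedLoopInertia_lagrangeTop (I₁ I₃ : ℝ) :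
    closedLoopInertia m l ρ ![0, 0, 1] (diagonal ![I₁, I₁, I₃])
      = diagonal ![ρ * I₁ - (m * l) ^ 2, ρ * I₁ - (m * l) ^ 2, ρ * I₃] := by
  ext i j
  fin_cases i <;> fin_cases j <;>
    simp [closedLoopInertia, vecMulVec, dotProduct, Fin.sum_univ_three, sub_eq_add_neg]

theorem closedLoop_momentum_combination (Ω v : Fin 3 → ℝ) :
    ρ • (I *ᵥ Ω + (m * l) • (χ ⨯₃ v)) + (m * l) • ((ρ • v + (m * l) • (Ω ⨯₃ χ)) ⨯₃ χ)
      = closedLoopInertia m l ρ χ I *ᵥ Ω := by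
  rw [closedLoopInertia_mulVec]
  simp only [map_add, map_smul, LinearMap.add_apply, LinearMap.smul_apply]
  linear_combination (norm := module) (ρ * (m * l)) • cross_anticomm' χ v

theorem closedLoop_torque_combination (Ω v Γ : Fin 3 → ℝ) :
    ρ • ((I *ᵥ Ω + (m * l) • (χ ⨯₃ v)) ⨯₃ Ω + (ρ • v + (m * l) • (Ω ⨯₃ χ)) ⨯₃ v
        - (m * g * l) • (χ ⨯₃ Γ))
      + (m * l) • (((ρ • v + (m * l) • (Ω ⨯₃ χ)) ⨯₃ Ω) ⨯₃ χ)
      = (closedLoopInertia m l ρ χ I *ᵥ Ω) ⨯₃ Ω + (ρ * (m * g * l)) • (Γ ⨯₃ χ) := by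
  have jacobi_v := jacobi_cross' χ v Ω
  have jacobi_Ω := jacobi_cross' (Ω ⨯₃ χ) Ω χ
  rw [cross_self, ← cross_anticomm (Ω ⨯₃ χ) χ] at jacobi_Ω
  rw [closedLoopInertia_mulVec]
  simp only [map_add, map_smul, LinearMap.add_apply, LinearMap.smul_apply, cross_self, map_neg,
    LinearMap.neg_apply] at jacobi_Ω ⊢
  linear_combination (norm := module)
    (ρ * (m * l)) • jacobi_v + (m * l) ^ 2 • jacobi_Ω - (ρ * (m * g * l)) • cross_anticomm' χ Γ

theorem ClosedLoopEP.hasDerivAt_closedLoopInertia_mulVec {Ω v Γ : ℝ → Fin 3 → ℝ}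
    (h : ClosedLoopEP m l g ρ χ I Ω v Γ) (t : ℝ) :
    HasDerivAt (fun s => closedLoopInertia m l ρ χ I *ᵥ Ω s)
      ((closedLoopInertia m l ρ χ I *ᵥ Ω t) ⨯₃ Ω t + (ρ * (m * g * l)) • (Γ t ⨯₃ χ)) t := by
  obtain ⟨hΩ, hv, -, hμ, hp, -⟩ := h
  have hΩt := (hΩ t).hasDerivAt
  have hvt := (hv t).hasDerivAt
  have hμt := ((hΩt.mulVec I).fun_add
    (((hasDerivAt_const t χ).cross hvt).fun_const_smul (m * l))).differentiableAt.hasDerivAt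
  have hpt := ((hvt.fun_const_smul ρ).fun_add
    ((hΩt.cross (hasDerivAt_const t χ)).fun_const_smul (m * l))).differentiableAt.hasDerivAt
  rw [hμ t] at hμt
  rw [hp t] at hpt
  have hJΩ := (hμt.fun_const_smul ρ).fun_add
    ((hpt.cross (hasDerivAt_const t χ)).fun_const_smul (m * l))
  rw [map_zero, zero_add, closedLoop_torque_combination] at hJΩ
  simpa only [closedLoop_momentum_combination] using hJΩ

theorem ClosedLoopEP.hasDerivAt_Γ {Ω v Γ : ℝ → Fin 3 → ℝ}
    (h : ClosedLoopEP m l g ρ χ I Ω v Γ) (t : ℝ) : HasDerivAt Γ (Γ t ⨯₃ Ω t) t :=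
  h.2.2.2.2.2 t ▸ (h.2.2.1 t).hasDerivAt

end ClosedLoop

theorem heavyTop_modified_energy_constant_general (m l g ρ I₁ I₃ : ℝ)
    (hI₃ : 0 < I₃)
    (hρ : ρ ≠ 0) (hρm : I₁ * ρ ≠ m ^ 2 * l ^ 2)
    (Ω v Γ : ℝ → Fin 3 → ℝ)
    (hsol : ClosedLoopEP m l g ρ ![(0 : ℝ), 0, 1] (Matrix.diagonal ![I₁, I₁, I₃]) Ω v Γ)
    (𝓔 : ℝ → ℝ)
    (h𝓔 : ∀ t, 𝓔 t = (1 / 2) * (I₁ * ((Ω t 0) ^ 2 + (Ω t 1) ^ 2) + I₃ * (Ω t 2) ^ 2)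
        + m * (I₁ * ρ / (I₁ * ρ - m ^ 2 * l ^ 2)) * g * l * Γ t 2) :
    ∀ t, 𝓔 t = 𝓔 0 := by
  have hJΩ := hsol.hasDerivAt_closedLoopInertia_mulVec
  rw [closedLoopInertia_lagrangeTop] at hJΩ
  have hE := is_const_of_hasDerivAt_zero fun t =>
    heavyTopEnergy_hasDerivAt_zero (isSymm_diagonal _) (hsol.1 t) (hJΩ t) (hsol.hasDerivAt_Γ t)
  have hspin := is_const_of_hasDerivAt_zero fun t => lagrangeTop_hasDerivAt_spin (hJΩ t)
  intro t
  have hΩ₂ : Ω t 2 = Ω 0 2 := mul_left_cancel₀ (mul_ne_zero hρ hI₃.ne') (hspin t 0)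
  have hEt := hE t 0
  rw [heavyTopEnergy_lagrangeTop, heavyTopEnergy_lagrangeTop, hΩ₂] at hEt
  have hk : I₁ * ρ - m ^ 2 * l ^ 2 ≠ 0 := sub_ne_zero.mpr hρm
  rw [h𝓔, h𝓔, hΩ₂]
  field_simp
  linear_combination 2 * I₁ * hEt

/-- For the Lagrange top (`𝕀 = diag(I₁, I₁, I₃)`, `χ = e₃`), along solutions of the
closed-loop system the modified energy
`𝓔 = ½(I₁(Ω₁² + Ω₂²) + I₃Ω₃²) + m (I₁ρ/(I₁ρ − m²l²)) g l Γ₃` (the heavy-top energy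
with modified gravitational constant `(I₁ρ/(I₁ρ − m²l²)) g`) is constant in time. -/
theorem heavyTop_modified_energy_constant (m l g ρ I₁ I₃ : ℝ)
    (hm : 0 < m) (hl : 0 < l) (hg : 0 < g) (hI₁ : 0 < I₁) (hI₃ : 0 < I₃)
    (hρ : ρ ≠ 0) (hρm : I₁ * ρ ≠ m ^ 2 * l ^ 2)
    (Ω v Γ : ℝ → Fin 3 → ℝ)
    (hsol : ClosedLoopEP m l g ρ ![(0 : ℝ), 0, 1] (Matrix.diagonal ![I₁, I₁, I₃]) Ω v Γ)
    (𝓔 : ℝ → ℝ)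
    (h𝓔 : ∀ t, 𝓔 t = (1 / 2) * (I₁ * ((Ω t 0) ^ 2 + (Ω t 1) ^ 2) + I₃ * (Ω t 2) ^ 2)
        + m * (I₁ * ρ / (I₁ * ρ - m ^ 2 * l ^ 2)) * g * l * Γ t 2) :
    ∀ t, 𝓔 t = 𝓔 0 :=
  heavyTop_modified_energy_constant_general m l g ρ I₁ I₃ hI₃ hρ hρm Ω v Γ hsol 𝓔 h𝓔
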